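/- Assume (Hg) and the cut-off setup with ρ > 0, and let Φ₀ : ℝ → ℝⁿ be bounded and C¹ with ∂ξΦ₀ ∈ L² and g(Φ₀) ∈ L², and let ψ_tw ∈ H¹. Then there exists K > 0, not depending on Φ, such that for every Φ with Φ − Φ₀ ∈ H¹ and ‖Φ − Φ₀‖_{H¹} ≤ 1, every σ ∈ [0,1] and every v ∈ H¹: ‖S̄_{σ;Φ}(v) − S̄_{σ;Φ}(0)‖_{L²} ≤ K‖v‖_{H¹}, where S̄_{σ;Φ}(v) = κ_σ(Φ+v, ψ_tw)^{-1/2}[g(Φ+v) + b(Φ+v, ψ_tw)(∂ξΦ + ∂ξv)]. -/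

import Mathlib

open MeasureTheory

noncomputable section

abbrev En (n : ℕ) : Type := EuclideanSpace ℝ (Fin n)

/-- membership in `L²(ℝ;ℝⁿ)` -/
def memL2 {n : ℕ} (f : ℝ → En n) : Prop := MemLp f 2 volume

/-- the `L²` norm -/
def l2norm {n : ℕ} (f : ℝ → En n) : ℝ := (eLpNorm f 2 volume).toReal

/-- the `L²` inner product -/
def l2inner {n : ℕ} (f g : ℝ → En n) : ℝ := ∫ ξ, (inner ℝ (f ξ) (g ξ) : ℝ)

/-- `f` is locally absolutely continuous with derivative `f'` -/
def hasWeakDeriv {n : ℕ} (f f' : ℝ → En n) : Prop :=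
  LocallyIntegrable f' volume ∧ ∀ x y : ℝ, f y - f x = ∫ t in x..y, f' t

/-- membership in `H¹`, with the derivative recorded explicitly -/
def memH1 {n : ℕ} (f f' : ℝ → En n) : Prop :=
  hasWeakDeriv f f' ∧ memL2 f ∧ memL2 f'

/-- the `H¹` norm -/
def h1norm {n : ℕ} (f f' : ℝ → En n) : ℝ :=
  Real.sqrt ((l2norm f)^2 + (l2norm f')^2)

/-- membership in `H²`, with both derivatives recorded explicitly -/
def memH2 {n : ℕ} (f f' f'' : ℝ → En n) : Prop :=
  memH1 f f' ∧ memH1 f' f''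

/-- the `H²` norm -/
def h2norm {n : ℕ} (f f' f'' : ℝ → En n) : ℝ :=
  Real.sqrt ((l2norm f)^2 + (l2norm f')^2 + (l2norm f'')^2)

/-- the function `b(u,ψ)` built from the cut-offs; `u` is the profile and `du` its derivative -/
def bfun {n : ℕ} (χlow χhigh : ℝ → ℝ) (g : En n → En n)
    (u du : ℝ → En n) (ψ : ℝ → En n) : ℝ :=
  -(χlow (l2inner du ψ))⁻¹ * χhigh (l2inner (fun ξ => g (u ξ)) ψ)

/-- the function `κ_σ = 1 + σ²b²/(2ρ)` -/
def kappa (ρ σ b : ℝ) : ℝ := 1 + σ^2 * b^2 / (2*ρ)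

/-- the stochastic nonlinearity `S̄_{σ;Φ}(v)` evaluated with profile `u` and
derivative `du`. -/
def Sfun {n : ℕ} (ρ σ : ℝ) (χlow χhigh : ℝ → ℝ) (g : En n → En n)
    (u du : ℝ → En n) (ψtw : ℝ → En n) : ℝ → En n :=
  fun ξ => (Real.sqrt (kappa ρ σ (bfun χlow χhigh g u du ψtw)))⁻¹ •
    (g (u ξ) + bfun χlow χhigh g u du ψtw • du ξ)


namespace Statement17Aux

variable {n : ℕ} {f g h ψ : ℝ → En n}

lemma l2norm_nonneg (f : ℝ → En n) : 0 ≤ l2norm f := ENNReal.toReal_nonneg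

lemma l2norm_eq_toLp (hf : memL2 f) : l2norm f = ‖hf.toLp f‖ :=
  (MeasureTheory.Lp.norm_toLp f hf).symm

lemma l2inner_eq (hf : memL2 f) (hψ : memL2 ψ) :
    l2inner f ψ = @inner ℝ _ _ (hf.toLp f) (hψ.toLp ψ) := by
  rw [MeasureTheory.L2.inner_def]
  exact (integral_congr_ae ((hf.coeFn_toLp.and hψ.coeFn_toLp).mono
    (by intro x hx; simp only [hx.1, hx.2]))).symm

lemma integrable_inner_l2 (hf : memL2 f) (hψ : memL2 ψ) :
    Integrable (fun ξ => (inner ℝ (f ξ) (ψ ξ) : ℝ)) volume := by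
  have := MeasureTheory.L2.integrable_inner (𝕜 := ℝ) (hf.toLp f) (hψ.toLp ψ)
  exact this.congr ((hf.coeFn_toLp.and hψ.coeFn_toLp).mono
    (by intro x hx; simp only [hx.1, hx.2]))

lemma abs_l2inner_le (hf : memL2 f) (hψ : memL2 ψ) :
    |l2inner f ψ| ≤ l2norm f * l2norm ψ := by
  rw [l2inner_eq hf hψ, l2norm_eq_toLp hf, l2norm_eq_toLp hψ]
  exact abs_real_inner_le_norm _ _

lemma l2inner_sub_left (hf : memL2 f) (hh : memL2 h) (hψ : memL2 ψ) :
    l2inner f ψ - l2inner h ψ = l2inner (fun ξ => f ξ - h ξ) ψ := by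
  unfold l2inner
  rw [← integral_sub (integrable_inner_l2 hf hψ) (integrable_inner_l2 hh hψ)]
  simp [inner_sub_left]

lemma l2norm_add_le (hf : memL2 f) (hg : memL2 g) :
    l2norm (fun ξ => f ξ + g ξ) ≤ l2norm f + l2norm g := by
  have h1 : memL2 (fun ξ => f ξ + g ξ) := hf.add hg
  rw [l2norm_eq_toLp hf, l2norm_eq_toLp hg, l2norm_eq_toLp h1]
  have : h1.toLp _ = hf.toLp f + hg.toLp g := MemLp.toLp_add hf hg
  rw [this]
  exact norm_add_le _ _

lemma l2norm_smul (c : ℝ) (f : ℝ → En n) :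
    l2norm (fun ξ => c • f ξ) = |c| * l2norm f := by
  unfold l2norm
  rw [show (fun ξ => c • f ξ) = c • f from rfl, eLpNorm_const_smul]
  simp [ENNReal.toReal_mul, Real.norm_eq_abs]

lemma l2norm_mono (hg : memL2 g) (hle : ∀ ξ, ‖f ξ‖ ≤ ‖g ξ‖) :
    l2norm f ≤ l2norm g :=
  ENNReal.toReal_mono hg.2.ne (eLpNorm_mono hle)

lemma l2norm_le_h1norm_fst (f f' : ℝ → En n) : l2norm f ≤ h1norm f f' := by
  have h := Real.sqrt_le_sqrt (show (l2norm f)^2 ≤ (l2norm f)^2 + (l2norm f')^2 by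
    nlinarith [sq_nonneg (l2norm f')])
  rwa [Real.sqrt_sq (l2norm_nonneg f)] at h

lemma l2norm_le_h1norm_snd (f f' : ℝ → En n) : l2norm f' ≤ h1norm f f' := by
  have h := Real.sqrt_le_sqrt (show (l2norm f')^2 ≤ (l2norm f)^2 + (l2norm f')^2 by
    nlinarith [sq_nonneg (l2norm f)])
  rwa [Real.sqrt_sq (l2norm_nonneg f')] at h

lemma h1norm_nonneg (f f' : ℝ → En n) : 0 ≤ h1norm f f' := Real.sqrt_nonneg _

lemma one_le_kappa {ρ σ b : ℝ} (hρ : 0 < ρ) : 1 ≤ kappa ρ σ b := by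
  have : 0 ≤ σ^2 * b^2 / (2*ρ) := by positivity
  unfold kappa; linarith

lemma inv_sqrt_mem {κ : ℝ} (h : 1 ≤ κ) :
    0 ≤ (Real.sqrt κ)⁻¹ ∧ (Real.sqrt κ)⁻¹ ≤ 1 := by
  have h1 : 1 ≤ Real.sqrt κ := by
    rw [show (1:ℝ) = Real.sqrt 1 by simp]
    exact Real.sqrt_le_sqrt h
  exact ⟨by positivity, inv_le_one_of_one_le₀ h1⟩

lemma sqrt_inv_lip {a b : ℝ} (ha : 1 ≤ a) (hb : 1 ≤ b) :
    |(Real.sqrt a)⁻¹ - (Real.sqrt b)⁻¹| ≤ |a - b| := by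
  have ha0 : (0:ℝ) ≤ a := by linarith
  have hb0 : (0:ℝ) ≤ b := by linarith
  set sa := Real.sqrt a with hsa
  set sb := Real.sqrt b with hsb
  have h1 : 1 ≤ sa := by
    rw [hsa, show (1:ℝ) = Real.sqrt 1 by simp]; exact Real.sqrt_le_sqrt ha
  have h2 : 1 ≤ sb := by
    rw [hsb, show (1:ℝ) = Real.sqrt 1 by simp]; exact Real.sqrt_le_sqrt hb
  have ha2 : sa^2 = a := Real.sq_sqrt ha0
  have hb2 : sb^2 = b := Real.sq_sqrt hb0
  have key : |sa - sb| * (sa + sb) = |a - b| := by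
    rw [← abs_of_pos (show (0:ℝ) < sa + sb by linarith), ← abs_mul]
    congr 1; nlinarith
  have h3 : |sb - sa| ≤ |a - b| := by
    rw [abs_sub_comm]
    nlinarith [abs_nonneg (sa - sb)]
  have h4 : sa⁻¹ - sb⁻¹ = (sb - sa) / (sa * sb) := by field_simp
  rw [h4, abs_div, abs_of_pos (show (0:ℝ) < sa*sb by nlinarith)]
  have h5 : |sb - sa| / (sa*sb) ≤ |sb - sa| :=
    div_le_self (abs_nonneg _) (by nlinarith)
  linarith

lemma inv_diff_le {x y : ℝ} (hx : 1/4 ≤ x) (hy : 1/4 ≤ y) :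
    |x⁻¹ - y⁻¹| ≤ 16*|x - y| := by
  have hx0 : (0:ℝ) < x := by linarith
  have hy0 : (0:ℝ) < y := by linarith
  have h : x⁻¹ - y⁻¹ = (y - x)/(x*y) := by field_simp
  have hxy : 1/16 ≤ x*y := by nlinarith
  rw [h, abs_div, abs_of_pos (mul_pos hx0 hy0), div_le_iff₀ (mul_pos hx0 hy0),
    abs_sub_comm]
  nlinarith [mul_nonneg (abs_nonneg (x - y)) (show (0:ℝ) ≤ 16*(x*y)-1 by linarith)]

lemma kappa_diff {ρ σ b1 b2 Cb : ℝ} (hρ : 0 < ρ) (hσ0 : 0 ≤ σ) (hσ1 : σ ≤ 1)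
    (h1 : |b1| ≤ Cb) (h2 : |b2| ≤ Cb) :
    |kappa ρ σ b1 - kappa ρ σ b2| ≤ (Cb/ρ) * |b1 - b2| := by
  have hCb : 0 ≤ Cb := le_trans (abs_nonneg _) h1
  have e : kappa ρ σ b1 - kappa ρ σ b2 = σ^2 * ((b1-b2)*(b1+b2)) / (2*ρ) := by
    unfold kappa; ring
  rw [e, abs_div, abs_mul, abs_mul, abs_of_pos (show (0:ℝ) < 2*ρ by linarith),
    div_le_iff₀ (show (0:ℝ) < 2*ρ by linarith)]
  have hr : Cb/ρ * |b1-b2| * (2*ρ) = 2*Cb*|b1-b2| := by field_simp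
  rw [hr]
  have hsum : |b1 + b2| ≤ 2*Cb := le_trans (abs_add_le _ _) (by linarith)
  have hσ2 : |σ^2| ≤ 1 := by rw [abs_of_nonneg (sq_nonneg σ)]; nlinarith
  have h0 : 0 ≤ |b1 - b2| := abs_nonneg _
  have hXY : 0 ≤ |b1-b2| * |b1+b2| := mul_nonneg h0 (abs_nonneg _)
  nlinarith [mul_le_mul_of_nonneg_left hsum h0,
    mul_le_mul_of_nonneg_right hσ2 hXY]

lemma b_bound_scalar {x c Kip : ℝ} (hx : 1/4 ≤ x) (hc : |c| ≤ Kip+1) :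
    |-x⁻¹ * c| ≤ 4*(Kip+1) := by
  rw [abs_mul, abs_neg, abs_inv]
  have h4 : |x|⁻¹ ≤ 4 := by
    rw [abs_of_pos (by linarith), show (4:ℝ)=(1/4:ℝ)⁻¹ by norm_num]
    exact inv_anti₀ (by norm_num) hx
  have h0 := abs_nonneg c
  nlinarith [inv_nonneg.mpr (abs_nonneg x)]

lemma bdiff_scalar {χlow χhigh : ℝ → ℝ} {a1 a2 c1 c2 Kip Llow Lhigh : ℝ}
    (hlb : ∀ θ, (1/4:ℝ) ≤ χlow θ) (hbd : ∀ θ, |χhigh θ| ≤ Kip + 1)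
    (hLl : ∀ x y, |χlow x - χlow y| ≤ Llow * |x-y|)
    (hLh : ∀ x y, |χhigh x - χhigh y| ≤ Lhigh * |x-y|) :
    |(-(χlow a1)⁻¹ * χhigh c1) - (-(χlow a2)⁻¹ * χhigh c2)| ≤
      16*Llow*(Kip+1)*|a1-a2| + 4*Lhigh*|c1-c2| := by
  set x1 := χlow a1 with hx1d
  set x2 := χlow a2 with hx2d
  have hx1 : 1/4 ≤ x1 := hlb _
  have hx2 : 1/4 ≤ x2 := hlb _
  have hx10 : (0:ℝ) < x1 := by linarith
  have hinv1 : |x1⁻¹| ≤ 4 := by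
    rw [abs_of_pos (by positivity), show (4:ℝ) = (1/4:ℝ)⁻¹ by norm_num]
    exact inv_anti₀ (by norm_num) hx1
  have hinvd : |x1⁻¹ - x2⁻¹| ≤ 16*(Llow*|a1-a2|) := by
    calc |x1⁻¹ - x2⁻¹| ≤ 16*|x1 - x2| := inv_diff_le hx1 hx2
    _ ≤ 16*(Llow*|a1-a2|) := by
        have := hLl a1 a2; nlinarith
  have key : (-(x1)⁻¹ * χhigh c1) - (-(x2)⁻¹ * χhigh c2)
      = -((x1)⁻¹*(χhigh c1 - χhigh c2)) - ((x1)⁻¹ - (x2)⁻¹)*χhigh c2 := by ring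
  rw [key]
  have t1 : |-((x1)⁻¹*(χhigh c1 - χhigh c2))| ≤ 4*(Lhigh*|c1-c2|) := by
    rw [abs_neg, abs_mul]
    have := hLh c1 c2
    have h0 := abs_nonneg (χhigh c1 - χhigh c2)
    nlinarith [abs_nonneg (x1⁻¹)]
  have t2 : |((x1)⁻¹ - (x2)⁻¹)*χhigh c2| ≤ (16*(Llow*|a1-a2|))*(Kip+1) := by
    rw [abs_mul]
    have hb := hbd c2
    have h0 := abs_nonneg (x1⁻¹ - x2⁻¹)
    have h1 := abs_nonneg (χhigh c2)
    nlinarith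
  calc |_ - _| ≤ |-((x1)⁻¹*(χhigh c1 - χhigh c2))| + |((x1)⁻¹ - (x2)⁻¹)*χhigh c2| :=
        abs_sub _ _
    _ ≤ 16*Llow*(Kip+1)*|a1-a2| + 4*Lhigh*|c1-c2| := by nlinarith [t1, t2]

lemma abs_bfun_le {n : ℕ} (χlow χhigh : ℝ → ℝ) (g : En n → En n)
    (u du ψ : ℝ → En n) {Kip : ℝ}
    (hlb : ∀ θ, (1/4:ℝ) ≤ χlow θ) (hbd : ∀ θ, |χhigh θ| ≤ Kip + 1) :
    |bfun χlow χhigh g u du ψ| ≤ 4*(Kip+1) := by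
  unfold bfun
  exact b_bound_scalar (hlb _) (hbd _)

lemma bfun_diff {n : ℕ} (χlow χhigh : ℝ → ℝ) (g : En n → En n)
    (u1 du1 u2 du2 ψ : ℝ → En n) {Kip Llow Lhigh : ℝ}
    (hlb : ∀ θ, (1/4:ℝ) ≤ χlow θ) (hbd : ∀ θ, |χhigh θ| ≤ Kip + 1)
    (hLl : ∀ x y, |χlow x - χlow y| ≤ Llow * |x-y|)
    (hLh : ∀ x y, |χhigh x - χhigh y| ≤ Lhigh * |x-y|) :
    |bfun χlow χhigh g u1 du1 ψ - bfun χlow χhigh g u2 du2 ψ| ≤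
      16*Llow*(Kip+1)*|l2inner du1 ψ - l2inner du2 ψ|
      + 4*Lhigh*|l2inner (fun ξ => g (u1 ξ)) ψ - l2inner (fun ξ => g (u2 ξ)) ψ| := by
  unfold bfun
  exact bdiff_scalar hlb hbd hLl hLh

end Statement17Aux

open Statement17Aux in
set_option maxHeartbeats 2000000 in
/-- Lipschitz bound at the origin for `S̄_{σ;Φ}`. -/
theorem statement17 {n : ℕ} (hn : 1 ≤ n) (ρ : ℝ) (hρ : 0 < ρ)
    (g : En n → En n)
    (hg : ContDiff ℝ 1 g) (Kg : ℝ) (hKg : 0 < Kg)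
    (hDg : ∀ u : En n, ‖fderiv ℝ g u‖ ≤ Kg)
    (hDgLip : ∀ uA uB : En n, ‖fderiv ℝ g uA - fderiv ℝ g uB‖ ≤ Kg * ‖uA - uB‖)
    (Kip : ℝ) (hKip : 0 < Kip) (χlow χhigh : ℝ → ℝ)
    (hχlow_smooth : ContDiff ℝ (⊤ : ℕ∞) χlow) (hχlow_mono : Monotone χlow)
    (hχlow_lb : ∀ θ : ℝ, (1/4:ℝ) ≤ χlow θ)
    (hχlow_eq1 : ∀ θ : ℝ, θ ≤ 1/4 → χlow θ = 1/4)
    (hχlow_eq2 : ∀ θ : ℝ, 1/2 ≤ θ → χlow θ = θ)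
    (hχlow_lip : ∃ L : ℝ, ∀ x y : ℝ, |χlow x - χlow y| ≤ L * |x - y|)
    (hχhigh_smooth : ContDiff ℝ (⊤ : ℕ∞) χhigh) (hχhigh_mono : Monotone χhigh)
    (hχhigh_bd : ∀ θ : ℝ, |χhigh θ| ≤ Kip + 1)
    (hχhigh_eq1 : ∀ θ : ℝ, |θ| ≤ Kip → χhigh θ = θ)
    (hχhigh_eq2 : ∀ θ : ℝ, Kip + 1 ≤ |θ| → χhigh θ = Real.sign θ * (Kip + 1))
    (hχhigh_lip : ∃ L : ℝ, ∀ x y : ℝ, |χhigh x - χhigh y| ≤ L * |x - y|)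
    (Φ₀ : ℝ → En n) (hΦ₀C1 : ContDiff ℝ 1 Φ₀)
    (hΦ₀bdd : ∃ B : ℝ, ∀ ξ, ‖Φ₀ ξ‖ ≤ B)
    (hΦ₀' : memL2 (deriv Φ₀))
    (hgΦ₀ : memL2 (fun ξ => g (Φ₀ ξ)))
    (ψtw ψtw' : ℝ → En n) (hψtw : memH1 ψtw ψtw') :
    ∃ K > (0:ℝ),
      ∀ p p' : ℝ → En n, memH1 p p' → h1norm p p' ≤ 1 →
      ∀ σ : ℝ, 0 ≤ σ → σ ≤ 1 →
      ∀ v v' : ℝ → En n, memH1 v v' →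
        l2norm (fun ξ =>
          Sfun ρ σ χlow χhigh g (fun x => Φ₀ x + p x + v x)
            (fun x => deriv Φ₀ x + p' x + v' x) ψtw ξ
          - Sfun ρ σ χlow χhigh g (fun x => Φ₀ x + p x)
            (fun x => deriv Φ₀ x + p' x) ψtw ξ) ≤ K * h1norm v v' := by
  classical
  obtain ⟨Llow, hLlow⟩ := hχlow_lip
  obtain ⟨Lhigh, hLhigh⟩ := hχhigh_lip
  have hLlow0 : 0 ≤ Llow := by
    have h := hLlow 0 1
    have h2 := abs_nonneg (χlow 0 - χlow 1)
    simp only [zero_sub, abs_neg, abs_one, mul_one] at h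
    linarith
  have hLhigh0 : 0 ≤ Lhigh := by
    have h := hLhigh 0 1
    have h2 := abs_nonneg (χhigh 0 - χhigh 1)
    simp only [zero_sub, abs_neg, abs_one, mul_one] at h
    linarith
  have hψL2 : memL2 ψtw := hψtw.2.1
  set Nψ : ℝ := l2norm ψtw with hNψdef
  clear_value Nψ
  have hNψ0 : 0 ≤ Nψ := by rw [hNψdef]; exact l2norm_nonneg _
  set Cb : ℝ := 4*(Kip+1) with hCbdef
  clear_value Cb
  have hCb0 : 0 < Cb := by rw [hCbdef]; linarith
  set Lb : ℝ := 16*Llow*(Kip+1)*Nψ + 4*Lhigh*Kg*Nψ with hLbdef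
  clear_value Lb
  have hLb0 : 0 ≤ Lb := by
    rw [hLbdef]
    have h1 : 0 ≤ 16*Llow*(Kip+1)*Nψ :=
      mul_nonneg (mul_nonneg (mul_nonneg (by norm_num) hLlow0) (by linarith)) hNψ0
    have h2 : 0 ≤ 4*Lhigh*Kg*Nψ :=
      mul_nonneg (mul_nonneg (mul_nonneg (by norm_num) hLhigh0) hKg.le) hNψ0
    linarith
  set D1 : ℝ := l2norm (deriv Φ₀) + 1 with hD1def
  clear_value D1
  have hD10 : 0 < D1 := by
    rw [hD1def]; have := l2norm_nonneg (deriv Φ₀); linarith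
  set GM : ℝ := l2norm (fun ξ => g (Φ₀ ξ)) + Kg + Cb * D1 with hGMdef
  clear_value GM
  have hGM0 : 0 < GM := by
    rw [hGMdef]
    have := l2norm_nonneg (fun ξ => g (Φ₀ ξ))
    nlinarith
  have hCbρ : 0 ≤ Cb/ρ := div_nonneg hCb0.le hρ.le
  refine ⟨Kg + Cb + Lb*D1 + (Cb/ρ)*Lb*GM + 1, ?_, ?_⟩
  · have h1 : 0 ≤ Lb*D1 := mul_nonneg hLb0 hD10.le
    have h2 : 0 ≤ (Cb/ρ)*Lb*GM := mul_nonneg (mul_nonneg hCbρ hLb0) hGM0.le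
    linarith
  intro p p' hp hp1 σ hσ0 hσ1 v v' hv
  -- Lipschitz bound for g
  have gLip : ∀ x y : En n, ‖g x - g y‖ ≤ Kg * ‖x - y‖ := fun x y =>
    Convex.norm_image_sub_le_of_norm_fderiv_le
      (fun z _ => (hg.differentiable one_ne_zero).differentiableAt)
      (fun z _ => hDg z) convex_univ (Set.mem_univ y) (Set.mem_univ x)
  -- membership facts
  have hΦ₀meas : AEStronglyMeasurable Φ₀ volume := hΦ₀C1.continuous.aestronglyMeasurable
  have hpL2 : memL2 p := hp.2.1
  have hp'L2 : memL2 p' := hp.2.2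
  have hvL2 : memL2 v := hv.2.1
  have hv'L2 : memL2 v' := hv.2.2
  have hd0 : memL2 (fun x => deriv Φ₀ x + p' x) := hΦ₀'.add hp'L2
  have hdv : memL2 (fun x => deriv Φ₀ x + p' x + v' x) := hd0.add hv'L2
  have hu0meas : AEStronglyMeasurable (fun x => Φ₀ x + p x) volume := hΦ₀meas.add hpL2.1
  have humeas : AEStronglyMeasurable (fun x => Φ₀ x + p x + v x) volume := hu0meas.add hvL2.1
  have hgu0 : memL2 (fun x => g (Φ₀ x + p x)) := by
    refine MemLp.of_le (hgΦ₀.norm.add (hpL2.norm.const_mul Kg))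
      (hg.continuous.comp_aestronglyMeasurable hu0meas)
      (Filter.Eventually.of_forall fun x => ?_)
    have h1 : ‖g (Φ₀ x + p x) - g (Φ₀ x)‖ ≤ Kg * ‖p x‖ := by
      have h := gLip (Φ₀ x + p x) (Φ₀ x)
      simpa [add_sub_cancel_left] using h
    have h2 : ‖g (Φ₀ x + p x)‖ ≤ ‖g (Φ₀ x)‖ + Kg * ‖p x‖ := by
      have h := norm_add_le (g (Φ₀ x + p x) - g (Φ₀ x)) (g (Φ₀ x))
      simp only [sub_add_cancel] at h
      linarith
    have h3 : 0 ≤ ‖g (Φ₀ x)‖ + Kg * ‖p x‖ :=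
      add_nonneg (norm_nonneg _) (mul_nonneg hKg.le (norm_nonneg _))
    simpa [Real.norm_eq_abs, abs_of_nonneg h3] using h2
  have hpv : memL2 (fun x => p x + v x) := hpL2.add hvL2
  have hgu : memL2 (fun x => g (Φ₀ x + p x + v x)) := by
    refine MemLp.of_le (hgΦ₀.norm.add (hpv.norm.const_mul Kg))
      (hg.continuous.comp_aestronglyMeasurable humeas)
      (Filter.Eventually.of_forall fun x => ?_)
    have h1 : ‖g (Φ₀ x + p x + v x) - g (Φ₀ x)‖ ≤ Kg * ‖p x + v x‖ := by
      have h := gLip (Φ₀ x + p x + v x) (Φ₀ x)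
      have e : Φ₀ x + p x + v x - Φ₀ x = p x + v x := by abel
      rw [e] at h; exact h
    have h2 : ‖g (Φ₀ x + p x + v x)‖ ≤ ‖g (Φ₀ x)‖ + Kg * ‖p x + v x‖ := by
      have h := norm_add_le (g (Φ₀ x + p x + v x) - g (Φ₀ x)) (g (Φ₀ x))
      simp only [sub_add_cancel] at h
      linarith
    have h3 : 0 ≤ ‖g (Φ₀ x)‖ + Kg * ‖p x + v x‖ :=
      add_nonneg (norm_nonneg _) (mul_nonneg hKg.le (norm_nonneg _))
    simpa [Real.norm_eq_abs, abs_of_nonneg h3] using h2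
  -- norms
  set H : ℝ := h1norm v v' with hHdef
  clear_value H
  have hH0 : 0 ≤ H := by rw [hHdef]; exact h1norm_nonneg _ _
  have hvH : l2norm v ≤ H := by rw [hHdef]; exact l2norm_le_h1norm_fst v v'
  have hv'H : l2norm v' ≤ H := by rw [hHdef]; exact l2norm_le_h1norm_snd v v'
  have hpn : l2norm p ≤ 1 := le_trans (l2norm_le_h1norm_fst p p') hp1
  have hp'n : l2norm p' ≤ 1 := le_trans (l2norm_le_h1norm_snd p p') hp1
  have hd0n : l2norm (fun x => deriv Φ₀ x + p' x) ≤ D1 := by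
    have h := l2norm_add_le hΦ₀' hp'L2
    rw [hD1def]; linarith
  have hGdiff : l2norm (fun x => g (Φ₀ x + p x + v x) - g (Φ₀ x + p x)) ≤ Kg * l2norm v := by
    have hpt : ∀ x, ‖g (Φ₀ x + p x + v x) - g (Φ₀ x + p x)‖ ≤ ‖(fun x => Kg • v x) x‖ := by
      intro x
      rw [norm_smul, Real.norm_eq_abs, abs_of_pos hKg]
      have h := gLip (Φ₀ x + p x + v x) (Φ₀ x + p x)
      simpa [add_sub_cancel_left] using h
    have hm := l2norm_mono (g := fun x => Kg • v x) (hvL2.const_smul Kg) hpt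
    rwa [l2norm_smul, abs_of_pos hKg] at hm
  have hPdiff : l2norm (fun x => g (Φ₀ x + p x) - g (Φ₀ x)) ≤ Kg * l2norm p := by
    have hpt : ∀ x, ‖g (Φ₀ x + p x) - g (Φ₀ x)‖ ≤ ‖(fun x => Kg • p x) x‖ := by
      intro x
      rw [norm_smul, Real.norm_eq_abs, abs_of_pos hKg]
      have h := gLip (Φ₀ x + p x) (Φ₀ x)
      simpa [add_sub_cancel_left] using h
    have hm := l2norm_mono (g := fun x => Kg • p x) (hpL2.const_smul Kg) hpt
    rwa [l2norm_smul, abs_of_pos hKg] at hm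
  have hgu0n : l2norm (fun x => g (Φ₀ x + p x)) ≤ l2norm (fun ξ => g (Φ₀ ξ)) + Kg := by
    have he : (fun x => g (Φ₀ x + p x))
        = fun x => g (Φ₀ x) + (g (Φ₀ x + p x) - g (Φ₀ x)) := by
      funext x; abel
    have h := l2norm_add_le (f := fun ξ => g (Φ₀ ξ))
      (g := fun x => g (Φ₀ x + p x) - g (Φ₀ x)) hgΦ₀ (hgu0.sub hgΦ₀)
    rw [he]
    have h2 : Kg * l2norm p ≤ Kg := by nlinarith [l2norm_nonneg p]
    exact h.trans (by linarith [hPdiff])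
  -- inner product differences
  have hΔa : |l2inner (fun x => deriv Φ₀ x + p' x + v' x) ψtw
      - l2inner (fun x => deriv Φ₀ x + p' x) ψtw| ≤ Nψ * H := by
    have e1 : l2inner (fun x => deriv Φ₀ x + p' x + v' x) ψtw
        - l2inner (fun x => deriv Φ₀ x + p' x) ψtw = l2inner v' ψtw := by
      rw [l2inner_sub_left hdv hd0 hψL2]
      unfold l2inner
      congr 1
      funext ξ
      congr 1
      show (deriv Φ₀ ξ + p' ξ + v' ξ) - (deriv Φ₀ ξ + p' ξ) = v' ξ
      abel
    rw [e1, hNψdef, hHdef]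
    calc |l2inner v' ψtw| ≤ l2norm v' * l2norm ψtw := abs_l2inner_le hv'L2 hψL2
      _ ≤ l2norm ψtw * h1norm v v' := by
          rw [mul_comm]
          exact mul_le_mul_of_nonneg_left (l2norm_le_h1norm_snd v v') (l2norm_nonneg ψtw)
  have hΔc : |l2inner (fun ξ => g (Φ₀ ξ + p ξ + v ξ)) ψtw
      - l2inner (fun ξ => g (Φ₀ ξ + p ξ)) ψtw| ≤ Kg * Nψ * H := by
    rw [l2inner_sub_left hgu hgu0 hψL2, hNψdef, hHdef]
    have h1 : |l2inner (fun ξ => g (Φ₀ ξ + p ξ + v ξ) - g (Φ₀ ξ + p ξ)) ψtw|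
        ≤ l2norm (fun x => g (Φ₀ x + p x + v x) - g (Φ₀ x + p x)) * l2norm ψtw :=
      abs_l2inner_le (hgu.sub hgu0) hψL2
    have hX : l2norm (fun x => g (Φ₀ x + p x + v x) - g (Φ₀ x + p x))
        ≤ Kg * h1norm v v' :=
      hGdiff.trans (mul_le_mul_of_nonneg_left (l2norm_le_h1norm_fst v v') hKg.le)
    have h2 : l2norm (fun x => g (Φ₀ x + p x + v x) - g (Φ₀ x + p x)) * l2norm ψtw
        ≤ Kg * l2norm ψtw * h1norm v v' := by
      calc l2norm (fun x => g (Φ₀ x + p x + v x) - g (Φ₀ x + p x)) * l2norm ψtw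
          ≤ (Kg * h1norm v v') * l2norm ψtw :=
            mul_le_mul_of_nonneg_right hX (l2norm_nonneg ψtw)
        _ = Kg * l2norm ψtw * h1norm v v' := by ring
    exact le_trans h1 h2
  -- the cut-off coefficients
  simp only [Sfun]
  set bv := bfun χlow χhigh g (fun x => Φ₀ x + p x + v x)
    (fun x => deriv Φ₀ x + p' x + v' x) ψtw with hbvdef
  set b0 := bfun χlow χhigh g (fun x => Φ₀ x + p x)
    (fun x => deriv Φ₀ x + p' x) ψtw with hb0def
  clear_value bv b0
  have hbvbd : |bv| ≤ Cb := by
    rw [hbvdef, hCbdef]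
    exact abs_bfun_le χlow χhigh g _ _ ψtw hχlow_lb hχhigh_bd
  have hb0bd : |b0| ≤ Cb := by
    rw [hb0def, hCbdef]
    exact abs_bfun_le χlow χhigh g _ _ ψtw hχlow_lb hχhigh_bd
  have hbdiff : |bv - b0| ≤ Lb * H := by
    have h := bfun_diff χlow χhigh g (fun x => Φ₀ x + p x + v x)
      (fun x => deriv Φ₀ x + p' x + v' x) (fun x => Φ₀ x + p x)
      (fun x => deriv Φ₀ x + p' x) ψtw hχlow_lb hχhigh_bd hLlow hLhigh
    rw [← hbvdef, ← hb0def] at h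
    have hΔc2 : |l2inner (fun ξ => g ((fun x => Φ₀ x + p x + v x) ξ)) ψtw
        - l2inner (fun ξ => g ((fun x => Φ₀ x + p x) ξ)) ψtw| ≤ Kg * Nψ * H := hΔc
    have c1 : 0 ≤ 16*Llow*(Kip+1) :=
      mul_nonneg (mul_nonneg (by norm_num) hLlow0) (by linarith)
    have c2 : 0 ≤ 4*Lhigh := by linarith
    calc |bv - b0| ≤ 16*Llow*(Kip+1)*(Nψ*H) + 4*Lhigh*(Kg*Nψ*H) := by
          nlinarith [mul_le_mul_of_nonneg_left hΔa c1,
            mul_le_mul_of_nonneg_left hΔc2 c2, h]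
      _ = Lb * H := by rw [hLbdef]; ring
  have hκv : 1 ≤ kappa ρ σ bv := one_le_kappa hρ
  have hκ0 : 1 ≤ kappa ρ σ b0 := one_le_kappa hρ
  set αv : ℝ := (Real.sqrt (kappa ρ σ bv))⁻¹ with hαvdef
  set α0 : ℝ := (Real.sqrt (kappa ρ σ b0))⁻¹ with hα0def
  clear_value αv α0
  have hαvb : 0 ≤ αv ∧ αv ≤ 1 := by rw [hαvdef]; exact inv_sqrt_mem hκv
  have hαvabs : |αv| ≤ 1 := by rw [abs_of_nonneg hαvb.1]; exact hαvb.2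
  have hαd : |αv - α0| ≤ (Cb/ρ)*(Lb*H) := by
    have h1 : |αv - α0| ≤ |kappa ρ σ bv - kappa ρ σ b0| := by
      rw [hαvdef, hα0def]; exact sqrt_inv_lip hκv hκ0
    have h2 := kappa_diff (b1 := bv) (b2 := b0) hρ hσ0 hσ1 hbvbd hb0bd
    have h3 : (Cb/ρ)*|bv - b0| ≤ (Cb/ρ)*(Lb*H) := mul_le_mul_of_nonneg_left hbdiff hCbρ
    linarith
  -- pointwise decomposition
  have hfun : (fun ξ => αv • (g (Φ₀ ξ + p ξ + v ξ) + bv • (deriv Φ₀ ξ + p' ξ + v' ξ))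
        - α0 • (g (Φ₀ ξ + p ξ) + b0 • (deriv Φ₀ ξ + p' ξ)))
      = fun ξ => (αv • (g (Φ₀ ξ + p ξ + v ξ) - g (Φ₀ ξ + p ξ)) + (αv*bv) • v' ξ)
        + ((αv*(bv-b0)) • (deriv Φ₀ ξ + p' ξ)
          + (αv-α0) • (g (Φ₀ ξ + p ξ) + b0 • (deriv Φ₀ ξ + p' ξ))) := by
    funext ξ
    module
  rw [hfun]
  -- memL2 of the four pieces
  have m1 : memL2 (fun ξ => αv • (g (Φ₀ ξ + p ξ + v ξ) - g (Φ₀ ξ + p ξ))) :=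
    (hgu.sub hgu0).const_smul αv
  have m2 : memL2 (fun ξ => (αv*bv) • v' ξ) := hv'L2.const_smul (αv*bv)
  have m3 : memL2 (fun ξ => (αv*(bv-b0)) • (deriv Φ₀ ξ + p' ξ)) := hd0.const_smul (αv*(bv-b0))
  have m4 : memL2 (fun ξ => (αv-α0) • (g (Φ₀ ξ + p ξ) + b0 • (deriv Φ₀ ξ + p' ξ))) :=
    (hgu0.add (hd0.const_smul b0)).const_smul (αv-α0)
  -- bounds on each piece
  have t1 : l2norm (fun ξ => αv • (g (Φ₀ ξ + p ξ + v ξ) - g (Φ₀ ξ + p ξ))) ≤ Kg * H := by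
    rw [l2norm_smul]
    calc |αv| * l2norm (fun x => g (Φ₀ x + p x + v x) - g (Φ₀ x + p x))
        ≤ 1 * l2norm (fun x => g (Φ₀ x + p x + v x) - g (Φ₀ x + p x)) :=
          mul_le_mul_of_nonneg_right hαvabs (l2norm_nonneg _)
      _ = l2norm (fun x => g (Φ₀ x + p x + v x) - g (Φ₀ x + p x)) := one_mul _
      _ ≤ Kg * H := hGdiff.trans (mul_le_mul_of_nonneg_left hvH hKg.le)
  have t2 : l2norm (fun ξ => (αv*bv) • v' ξ) ≤ Cb * H := by
    rw [l2norm_smul, abs_mul]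
    calc |αv| * |bv| * l2norm v' ≤ 1 * Cb * H := by
          apply mul_le_mul _ hv'H (l2norm_nonneg _) (by nlinarith)
          exact mul_le_mul hαvabs hbvbd (abs_nonneg _) one_pos.le
      _ = Cb * H := by ring
  have t3 : l2norm (fun ξ => (αv*(bv-b0)) • (deriv Φ₀ ξ + p' ξ)) ≤ (Lb*H)*D1 := by
    rw [l2norm_smul, abs_mul]
    apply mul_le_mul _ hd0n (l2norm_nonneg _) (mul_nonneg hLb0 hH0)
    calc |αv| * |bv - b0| ≤ 1 * (Lb*H) :=
          mul_le_mul hαvabs hbdiff (abs_nonneg _) one_pos.le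
      _ = Lb*H := one_mul _
  have t4 : l2norm (fun ξ => (αv-α0) • (g (Φ₀ ξ + p ξ) + b0 • (deriv Φ₀ ξ + p' ξ)))
      ≤ ((Cb/ρ)*(Lb*H))*GM := by
    rw [l2norm_smul]
    have hM0 : l2norm (fun ξ => g (Φ₀ ξ + p ξ) + b0 • (deriv Φ₀ ξ + p' ξ)) ≤ GM := by
      have h := l2norm_add_le (f := fun ξ => g (Φ₀ ξ + p ξ))
        (g := fun ξ => b0 • (deriv Φ₀ ξ + p' ξ)) hgu0 (hd0.const_smul b0)
      have h2 : l2norm (fun ξ => b0 • (deriv Φ₀ ξ + p' ξ)) ≤ Cb * D1 := by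
        rw [l2norm_smul]
        exact mul_le_mul hb0bd hd0n (l2norm_nonneg _) hCb0.le
      rw [hGMdef]
      linarith
    exact mul_le_mul hαd hM0 (l2norm_nonneg _) (mul_nonneg hCbρ (mul_nonneg hLb0 hH0))
  -- combine
  have step : l2norm (fun ξ => (αv • (g (Φ₀ ξ + p ξ + v ξ) - g (Φ₀ ξ + p ξ)) + (αv*bv) • v' ξ)
        + ((αv*(bv-b0)) • (deriv Φ₀ ξ + p' ξ)
          + (αv-α0) • (g (Φ₀ ξ + p ξ) + b0 • (deriv Φ₀ ξ + p' ξ))))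
      ≤ (Kg*H + Cb*H) + ((Lb*H)*D1 + ((Cb/ρ)*(Lb*H))*GM) := by
    refine le_trans (l2norm_add_le (m1.add m2) (m3.add m4)) ?_
    exact add_le_add ((l2norm_add_le m1 m2).trans (add_le_add t1 t2))
      ((l2norm_add_le m3 m4).trans (add_le_add t3 t4))
  refine step.trans ?_
  nlinarith [hH0]
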